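/- Let (A, [·,·]) be a Lie superalgebra over a field of characteristic zero, let (V, ρ) be a representation of A, and let T : V → A be a super O-operator of weight zero associated to (V, ρ). Then the even bilinear product u ∘ v := ρ(T(u))v, defined for homogeneous u, v ∈ V, makes V a pre-Lie superalgebra. -/
import Mathlib


/-- The super sign `(−1)^{|x||y|}` for parities `i`, `j`. -/
def sgn (K : Type*) [Field K] (i j : ZMod 2) : K := (-1 : K) ^ (i.val * j.val)

/-- if `T` is a super O-operator of weight zero of a Lie superalgebra
`(A,[·,·])` associated to a representation `(V,ρ)`, then `u ∘ v := ρ(T(u))v` makes `V`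
a pre-Lie superalgebra. -/
theorem stmt6 {K A V : Type*} [Field K] [CharZero K]
    [AddCommGroup A] [Module K A] [AddCommGroup V] [Module K V]
    (𝒜 : ZMod 2 → Submodule K A) (hgrA : DirectSum.IsInternal 𝒜)
    (𝒱 : ZMod 2 → Submodule K V) (hgrV : DirectSum.IsInternal 𝒱)
    (br : A →ₗ[K] A →ₗ[K] A)
    (hbr_even : ∀ (i j : ZMod 2), ∀ x ∈ 𝒜 i, ∀ y ∈ 𝒜 j, br x y ∈ 𝒜 (i + j))
    (hskew : ∀ (i j : ZMod 2), ∀ x ∈ 𝒜 i, ∀ y ∈ 𝒜 j, br x y = -(sgn K i j • br y x))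
    (hjacobi : ∀ (i j k : ZMod 2), ∀ x ∈ 𝒜 i, ∀ y ∈ 𝒜 j, ∀ z ∈ 𝒜 k,
      br x (br y z) = br (br x y) z + sgn K i j • br y (br x z))
    (ρ : A →ₗ[K] V →ₗ[K] V)
    (hρ_even : ∀ (i j : ZMod 2), ∀ x ∈ 𝒜 i, ∀ v ∈ 𝒱 j, ρ x v ∈ 𝒱 (i + j))
    (hrep : ∀ (i j k : ZMod 2), ∀ x ∈ 𝒜 i, ∀ y ∈ 𝒜 j, ∀ v ∈ 𝒱 k,
      ρ (br x y) v = ρ x (ρ y v) - sgn K i j • ρ y (ρ x v))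
    (T : V →ₗ[K] A) (hT_even : ∀ (i : ZMod 2), ∀ v ∈ 𝒱 i, T v ∈ 𝒜 i)
    (hT : ∀ (i j : ZMod 2), ∀ u ∈ 𝒱 i, ∀ v ∈ 𝒱 j,
      br (T u) (T v) = T (ρ (T u) v - sgn K i j • ρ (T v) u)) :
    -- the product u ∘ v := ρ(T(u))v is even
    (∀ (i j : ZMod 2), ∀ u ∈ 𝒱 i, ∀ v ∈ 𝒱 j, ρ (T u) v ∈ 𝒱 (i + j)) ∧
    -- pre-Lie super-identity for u ∘ v := ρ(T(u))v
    (∀ (i j k : ZMod 2), ∀ u ∈ 𝒱 i, ∀ v ∈ 𝒱 j, ∀ w ∈ 𝒱 k,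
      ρ (T (ρ (T u) v)) w - ρ (T u) (ρ (T v) w)
        = sgn K i j • (ρ (T (ρ (T v) u)) w - ρ (T v) (ρ (T u) w))) := by
  constructor
  · intro i j u hu v hv
    exact hρ_even i j (T u) (hT_even i u hu) v hv
  · intro i j k u hu v hv w hw
    have h1 := hT i j u hu v hv
    have h2 := hrep i j k (T u) (hT_even i u hu) (T v) (hT_even j v hv) w hw
    have key : ρ (T (ρ (T u) v)) w - sgn K i j • ρ (T (ρ (T v) u)) w
        = ρ (T u) (ρ (T v) w) - sgn K i j • ρ (T v) (ρ (T u) w) := by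
      have h3 : ρ (T (ρ (T u) v - sgn K i j • ρ (T v) u)) w
          = ρ (T u) (ρ (T v) w) - sgn K i j • ρ (T v) (ρ (T u) w) := by
        rw [← h1, h2]
      simpa [map_sub, map_smul, LinearMap.sub_apply, LinearMap.smul_apply] using h3
    linear_combination (norm := module) key
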